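/- arXiv:2304.08739 — 2 statements merged into one kernel-verified Lean document; each statement's English description precedes it below -/
import Mathlib

section
/- Assume (H1), (H2), (H3) and in addition (H4): for all continuous v₁, v₂ : [0,L] → [0,∞) with v₁ ≤ v₂ pointwise and v₁ ≠ v₂, one has g(v₁) < g(v₂), where g(v) := (∫₀^L F(v(x))/d(v(x)) dx) / (∫₀^L 1/d(v(x)) dx). Fix ε, α > 0 and let ũ be a positive C² solution of the logistic problem. If θ > α g(ũ), then there exists μ₀ > 0 such that for every μ ≥ μ₀ the steady-state system (with diffusion rate μ in the predator equation) has no positive solution. -/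
/-- `(u, w)` is a positive solution of the steady-state predator-prey system
`ε u'' + u(m - u) - (F(u)/d(u)) w = 0`, `μ w'' + ((α F(u) - θ)/d(u)) w = 0`
on `[0, L]` with Neumann boundary conditions. -/
def IsPosSol (L ε μ α θ : ℝ) (m F d : ℝ → ℝ) (u w : ℝ → ℝ) : Prop :=
  ContDiffOn ℝ 2 u (Set.Icc 0 L) ∧ ContDiffOn ℝ 2 w (Set.Icc 0 L) ∧
  (∀ x ∈ Set.Icc 0 L, 0 < u x) ∧ (∀ x ∈ Set.Icc 0 L, 0 < w x) ∧
  (∀ x ∈ Set.Icc 0 L,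
    ε * iteratedDerivWithin 2 u (Set.Icc 0 L) x
      + u x * (m x - u x) - F (u x) / d (u x) * w x = 0) ∧
  (∀ x ∈ Set.Icc 0 L,
    μ * iteratedDerivWithin 2 w (Set.Icc 0 L) x
      + (α * F (u x) - θ) / d (u x) * w x = 0) ∧
  derivWithin u (Set.Icc 0 L) 0 = 0 ∧ derivWithin u (Set.Icc 0 L) L = 0 ∧
  derivWithin w (Set.Icc 0 L) 0 = 0 ∧ derivWithin w (Set.Icc 0 L) L = 0

/-- `u` is a positive solution of the logistic problem
`ε u'' + u(m(x) - u) = 0` on `[0, L]` with Neumann boundary conditions. -/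
def IsLogistic (L ε : ℝ) (m : ℝ → ℝ) (u : ℝ → ℝ) : Prop :=
  ContDiffOn ℝ 2 u (Set.Icc 0 L) ∧ (∀ x ∈ Set.Icc 0 L, 0 < u x) ∧
  (∀ x ∈ Set.Icc 0 L,
    ε * iteratedDerivWithin 2 u (Set.Icc 0 L) x + u x * (m x - u x) = 0) ∧
  derivWithin u (Set.Icc 0 L) 0 = 0 ∧ derivWithin u (Set.Icc 0 L) L = 0


open Set MeasureTheory intervalIntegral

lemma aux_iter2 {a b x : ℝ} (hab : a < b) (hx : x ∈ Set.Icc a b) (f : ℝ → ℝ) :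
    iteratedDerivWithin 2 f (Set.Icc a b) x
      = derivWithin (derivWithin f (Set.Icc a b)) (Set.Icc a b) x := by
  have hu : UniqueDiffOn ℝ (Set.Icc a b) := uniqueDiffOn_Icc hab
  rw [show (2:ℕ) = 1 + 1 from rfl, iteratedDerivWithin_succ',
    iteratedDerivWithin_one]

lemma aux_hasDeriv2 {a b : ℝ} (hab : a < b) {f : ℝ → ℝ}
    (hf : ContDiffOn ℝ 2 f (Set.Icc a b)) :
    ∀ x ∈ Set.Icc a b, HasDerivWithinAt (derivWithin f (Set.Icc a b))
      (iteratedDerivWithin 2 f (Set.Icc a b) x) (Set.Icc a b) x := by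
  intro x hx
  have hu : UniqueDiffOn ℝ (Set.Icc a b) := uniqueDiffOn_Icc hab
  have h1 : ContDiffOn ℝ 1 (derivWithin f (Set.Icc a b)) (Set.Icc a b) :=
    hf.derivWithin hu (by norm_num)
  have hdw : DifferentiableWithinAt ℝ (derivWithin f (Set.Icc a b)) (Set.Icc a b) x :=
    (h1.differentiableOn one_ne_zero) x hx
  have h2 := hdw.hasDerivWithinAt
  rwa [← aux_iter2 hab hx f] at h2

/-- FTC for an abstract derivative pair on a subinterval. -/
lemma aux_ftc {a b c e : ℝ} (hab : a < b) (hac : a ≤ c) (hce : c ≤ e) (heb : e ≤ b)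
    {g g' : ℝ → ℝ}
    (hgc : ContinuousOn g (Set.Icc a b))
    (hg'c : ContinuousOn g' (Set.Icc a b))
    (hderiv : ∀ x ∈ Set.Ioo a b, HasDerivWithinAt g (g' x) (Set.Icc a b) x) :
    ∫ x in c..e, g' x = g e - g c := by
  apply intervalIntegral.integral_eq_sub_of_hasDeriv_right_of_le hce
    (hgc.mono (Set.Icc_subset_Icc hac heb))
  · intro x hx
    have hxI : x ∈ Set.Ioo a b := ⟨lt_of_le_of_lt hac hx.1, lt_of_lt_of_le hx.2 heb⟩
    have hmem : Set.Icc a b ∈ nhds x := Icc_mem_nhds hxI.1 hxI.2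
    exact ((hderiv x hxI).hasDerivAt hmem).hasDerivWithinAt
  · apply ContinuousOn.intervalIntegrable
    rw [Set.uIcc_of_le hce]
    exact hg'c.mono (Set.Icc_subset_Icc hac heb)

/-- Lipschitz-type bound from a bound on the derivative. -/
lemma aux_lip {a b : ℝ} (hab : a < b) {g g' : ℝ → ℝ} {C : ℝ}
    (hgc : ContinuousOn g (Set.Icc a b)) (hg'c : ContinuousOn g' (Set.Icc a b))
    (hderiv : ∀ x ∈ Set.Ioo a b, HasDerivWithinAt g (g' x) (Set.Icc a b) x)
    (hC : ∀ x ∈ Set.Icc a b, |g' x| ≤ C) :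
    ∀ x ∈ Set.Icc a b, ∀ y ∈ Set.Icc a b, |g y - g x| ≤ C * |y - x| := by
  have key : ∀ x ∈ Set.Icc a b, ∀ y ∈ Set.Icc a b, x ≤ y → |g y - g x| ≤ C * |y - x| := by
    intro x hx y hy hxy
    have hftc := aux_ftc hab hx.1 hxy hy.2 hgc hg'c hderiv
    rw [← hftc]
    have hb := intervalIntegral.norm_integral_le_of_norm_le_const (a := x) (b := y)
      (C := C) (f := g') ?_
    · simpa [Real.norm_eq_abs, abs_sub_comm] using hb
    · intro z hz
      rw [Set.uIoc_of_le hxy] at hz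
      exact hC z ⟨le_trans hx.1 (le_of_lt hz.1), le_trans hz.2 hy.2⟩
  intro x hx y hy
  rcases le_total x y with h | h
  · exact key x hx y hy h
  · have h2 := key y hy x hx h
    rw [abs_sub_comm] at h2; rwa [abs_sub_comm x y] at h2

/-- At a minimum point of a C² function on an interval where the (one-sided)
derivative vanishes, the second derivative is nonnegative. -/
lemma aux_min_dd {a b x₀ : ℝ} {f : ℝ → ℝ} (hab : a < b)
    (hf : ContDiffOn ℝ 2 f (Set.Icc a b)) (hx₀ : x₀ ∈ Set.Icc a b)
    (hmin : ∀ x ∈ Set.Icc a b, f x₀ ≤ f x)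
    (hd0 : derivWithin f (Set.Icc a b) x₀ = 0) :
    0 ≤ iteratedDerivWithin 2 f (Set.Icc a b) x₀ := by
  by_contra hneg
  push_neg at hneg
  have hu : UniqueDiffOn ℝ (Set.Icc a b) := uniqueDiffOn_Icc hab
  set g := derivWithin f (Set.Icc a b) with hgdef
  have hg1 : ContDiffOn ℝ 1 g (Set.Icc a b) := hf.derivWithin hu (by norm_num)
  have hcont2 : ContinuousOn (iteratedDerivWithin 2 f (Set.Icc a b)) (Set.Icc a b) :=
    hf.continuousOn_iteratedDerivWithin (by norm_num) hu
  have hev : {y | iteratedDerivWithin 2 f (Set.Icc a b) y < 0} ∈ nhdsWithin x₀ (Set.Icc a b) :=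
    (hcont2 x₀ hx₀) (Iio_mem_nhds hneg)
  rcases lt_or_eq_of_le hx₀.2 with hxb | hxb
  · -- x₀ < b : work on the right
    have hev2 : {y | iteratedDerivWithin 2 f (Set.Icc a b) y < 0} ∈ nhdsWithin x₀ (Set.Ici x₀) := by
      rw [← nhdsWithin_Icc_eq_nhdsGE hxb]
      exact nhdsWithin_mono x₀ (Set.Icc_subset_Icc hx₀.1 le_rfl) hev
    obtain ⟨t, hxt, hsub⟩ := mem_nhdsGE_iff_exists_Icc_subset.mp hev2
    set t' := min t b with ht'def
    have hxt' : x₀ < t' := lt_min hxt hxb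
    have hIsub : Set.Icc x₀ t' ⊆ Set.Icc a b := Set.Icc_subset_Icc hx₀.1 (min_le_right _ _)
    have hneg' : ∀ y ∈ Set.Icc x₀ t', iteratedDerivWithin 2 f (Set.Icc a b) y < 0 :=
      fun y hy => hsub (Set.Icc_subset_Icc le_rfl (min_le_left _ _) hy)
    have hint : ∀ y ∈ Set.Ioo x₀ t', y ∈ Set.Ioo a b ∧ Set.Icc a b ∈ nhds y := by
      intro y hy
      have hyI : y ∈ Set.Ioo a b :=
        ⟨lt_of_le_of_lt hx₀.1 hy.1, lt_of_lt_of_le hy.2 (min_le_right _ _)⟩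
      exact ⟨hyI, Icc_mem_nhds hyI.1 hyI.2⟩
    have hganti : StrictAntiOn g (Set.Icc x₀ t') := by
      apply strictAntiOn_of_deriv_neg (convex_Icc _ _) (hg1.continuousOn.mono hIsub)
      intro y hy
      rw [interior_Icc] at hy
      obtain ⟨hyI, hmem⟩ := hint y hy
      rw [← derivWithin_of_mem_nhds hmem, ← aux_iter2 hab (Set.Ioo_subset_Icc_self hyI) f]
      exact hneg' y (Set.Ioo_subset_Icc_self hy)
    have hfanti : StrictAntiOn f (Set.Icc x₀ t') := by
      apply strictAntiOn_of_deriv_neg (convex_Icc _ _) (hf.continuousOn.mono hIsub)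
      intro y hy
      rw [interior_Icc] at hy
      obtain ⟨hyI, hmem⟩ := hint y hy
      rw [← derivWithin_of_mem_nhds hmem, ← hgdef]
      have := hganti (Set.left_mem_Icc.mpr hxt'.le) (Set.Ioo_subset_Icc_self hy) hy.1
      rw [hd0] at this
      exact this
    have h1 : f t' < f x₀ :=
      hfanti (Set.left_mem_Icc.mpr hxt'.le) (Set.right_mem_Icc.mpr hxt'.le) hxt'
    have h2 := hmin t' (hIsub (Set.right_mem_Icc.mpr hxt'.le))
    linarith
  · -- x₀ = b : work on the left
    have hax : a < x₀ := hxb ▸ hab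
    have hev2 : {y | iteratedDerivWithin 2 f (Set.Icc a b) y < 0} ∈ nhdsWithin x₀ (Set.Iic x₀) := by
      rw [← nhdsWithin_Icc_eq_nhdsLE hax]
      exact nhdsWithin_mono x₀ (Set.Icc_subset_Icc le_rfl hx₀.2) hev
    obtain ⟨t, hxt, hsub⟩ := mem_nhdsLE_iff_exists_Icc_subset.mp hev2
    set t' := max t a with ht'def
    have hxt' : t' < x₀ := max_lt hxt hax
    have hIsub : Set.Icc t' x₀ ⊆ Set.Icc a b := Set.Icc_subset_Icc (le_max_right _ _) hx₀.2
    have hneg' : ∀ y ∈ Set.Icc t' x₀, iteratedDerivWithin 2 f (Set.Icc a b) y < 0 :=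
      fun y hy => hsub (Set.Icc_subset_Icc (max_le_iff.mp le_rfl).1 le_rfl hy)
    have hint : ∀ y ∈ Set.Ioo t' x₀, y ∈ Set.Ioo a b ∧ Set.Icc a b ∈ nhds y := by
      intro y hy
      have hyI : y ∈ Set.Ioo a b :=
        ⟨lt_of_le_of_lt (le_max_right _ _) hy.1, lt_of_lt_of_le hy.2 hx₀.2⟩
      exact ⟨hyI, Icc_mem_nhds hyI.1 hyI.2⟩
    have hganti : StrictAntiOn g (Set.Icc t' x₀) := by
      apply strictAntiOn_of_deriv_neg (convex_Icc _ _) (hg1.continuousOn.mono hIsub)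
      intro y hy
      rw [interior_Icc] at hy
      obtain ⟨hyI, hmem⟩ := hint y hy
      rw [← derivWithin_of_mem_nhds hmem, ← aux_iter2 hab (Set.Ioo_subset_Icc_self hyI) f]
      exact hneg' y (Set.Ioo_subset_Icc_self hy)
    have hfmono : StrictMonoOn f (Set.Icc t' x₀) := by
      apply strictMonoOn_of_deriv_pos (convex_Icc _ _) (hf.continuousOn.mono hIsub)
      intro y hy
      rw [interior_Icc] at hy
      obtain ⟨hyI, hmem⟩ := hint y hy
      rw [← derivWithin_of_mem_nhds hmem, ← hgdef]
      have := hganti (Set.Ioo_subset_Icc_self hy) (Set.right_mem_Icc.mpr hxt'.le) hy.2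
      rw [hd0] at this
      linarith
    have h1 : f t' < f x₀ :=
      hfmono (Set.left_mem_Icc.mpr hxt'.le) (Set.right_mem_Icc.mpr hxt'.le) hxt'
    have h2 := hmin t' (hIsub (Set.left_mem_Icc.mpr hxt'.le))
    linarith

/-- under (H1)-(H4), if `θ > α g(ũ)` where
`g(v) = (∫₀^L F(v)/d(v)) / (∫₀^L 1/d(v))`, then for all sufficiently large
predator diffusion rates `μ` the steady-state system has no positive solution. -/

theorem stmt_17 (L ε α θ : ℝ) (hL : 0 < L) (hε : 0 < ε) (hα : 0 < α)
    (m F d tu : ℝ → ℝ)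
    -- (H1)
    (hm_cont : ContinuousOn m (Set.Icc 0 L))
    (hm_noncon : ∃ x ∈ Set.Icc 0 L, ∃ y ∈ Set.Icc 0 L, m x ≠ m y)
    (hm_int : 0 < ∫ x in (0:ℝ)..L, m x)
    -- (H2)
    (hF_smooth : ContDiffOn ℝ 1 F (Set.Ici 0)) (hF0 : F 0 = 0)
    (hF_deriv : ∀ s ∈ Set.Ici (0:ℝ), 0 < derivWithin F (Set.Ici 0) s)
    -- (H3)
    (hd_smooth : ContDiffOn ℝ 2 d (Set.Ici 0))
    (hd_pos : ∀ s ∈ Set.Ici (0:ℝ), 0 < d s)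
    (hd_deriv : ∀ s ∈ Set.Ici (0:ℝ), derivWithin d (Set.Ici 0) s ≤ 0)
    (hd_ne : ∃ s ∈ Set.Ici (0:ℝ), derivWithin d (Set.Ici 0) s ≠ 0)
    -- (H4): strict monotonicity of g
    (hH4 : ∀ v₁ v₂ : ℝ → ℝ, ContinuousOn v₁ (Set.Icc 0 L) →
      ContinuousOn v₂ (Set.Icc 0 L) →
      (∀ x ∈ Set.Icc 0 L, 0 ≤ v₁ x) → (∀ x ∈ Set.Icc 0 L, 0 ≤ v₂ x) →
      (∀ x ∈ Set.Icc 0 L, v₁ x ≤ v₂ x) → (∃ x ∈ Set.Icc 0 L, v₁ x ≠ v₂ x) →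
      (∫ x in (0:ℝ)..L, F (v₁ x) / d (v₁ x)) / (∫ x in (0:ℝ)..L, 1 / d (v₁ x))
        < (∫ x in (0:ℝ)..L, F (v₂ x) / d (v₂ x)) /
            (∫ x in (0:ℝ)..L, 1 / d (v₂ x)))
    -- positive solution of the logistic problem
    (htu : IsLogistic L ε m tu)
    -- θ large
    (hθ : α * ((∫ x in (0:ℝ)..L, F (tu x) / d (tu x)) /
      (∫ x in (0:ℝ)..L, 1 / d (tu x))) < θ) :
    ∃ μ₀ : ℝ, 0 < μ₀ ∧ ∀ μ : ℝ, μ₀ ≤ μ →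
      ¬ ∃ u w, IsPosSol L ε μ α θ m F d u w := by
  obtain ⟨htu2, htupos, htueq, htu'0, htu'L⟩ := htu
  have hI0 : (0:ℝ) ∈ Set.Icc (0:ℝ) L := Set.left_mem_Icc.mpr hL.le
  have hIL : L ∈ Set.Icc (0:ℝ) L := Set.right_mem_Icc.mpr hL.le
  have hIne : (Set.Icc (0:ℝ) L).Nonempty := ⟨0, hI0⟩
  have hu' : UniqueDiffOn ℝ (Set.Icc (0:ℝ) L) := uniqueDiffOn_Icc hL
  have htuc : ContinuousOn tu (Set.Icc 0 L) := htu2.continuousOn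
  have hFc : ContinuousOn F (Set.Ici 0) := hF_smooth.continuousOn
  have hdc : ContinuousOn d (Set.Ici 0) := hd_smooth.continuousOn
  -- F is positive at positive arguments
  have hFmono : StrictMonoOn F (Set.Ici 0) := by
    apply strictMonoOn_of_deriv_pos (convex_Ici 0) hFc
    intro x hx
    rw [interior_Ici] at hx
    rw [← derivWithin_of_mem_nhds (Ici_mem_nhds hx)]
    exact hF_deriv x (Set.mem_Ici.mpr (le_of_lt hx))
  have hFpos : ∀ s : ℝ, 0 < s → 0 < F s := by
    intro s hs
    have h := hFmono Set.self_mem_Ici (Set.mem_Ici.mpr hs.le) hs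
    rwa [hF0] at h
  -- the maximum of tu
  obtain ⟨xU, hxU, hxUmax⟩ := isCompact_Icc.exists_isMaxOn hIne htuc
  set Mu := tu xU with hMudef
  have hMupos : 0 < Mu := htupos xU hxU
  have hsubI : Set.Icc (0:ℝ) Mu ⊆ Set.Ici 0 := Set.Icc_subset_Ici_self
  have hMne : (Set.Icc (0:ℝ) Mu).Nonempty := ⟨0, Set.left_mem_Icc.mpr hMupos.le⟩
  obtain ⟨sF, hsF, hsFmax⟩ := isCompact_Icc.exists_isMaxOn hMne ((hFc.mono hsubI).abs)
  obtain ⟨sd1, hsd1, hsd1min⟩ := isCompact_Icc.exists_isMinOn hMne (hdc.mono hsubI)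
  obtain ⟨sd2, hsd2, hsd2max⟩ := isCompact_Icc.exists_isMaxOn hMne (hdc.mono hsubI)
  set Fmax := |F sF| with hFmaxdef
  set dmin := d sd1 with hdmindef
  set dmax := d sd2 with hdmaxdef
  have hdminpos : 0 < dmin := hd_pos _ (hsubI hsd1)
  have hdmaxpos : 0 < dmax := hd_pos _ (hsubI hsd2)
  have hFmaxnn : 0 ≤ Fmax := abs_nonneg _
  set C0 := (α * Fmax + |θ|) / dmin with hC0def
  have hC0nn : 0 ≤ C0 := div_nonneg (by positivity) hdminpos.le
  set G2 := (∫ x in (0:ℝ)..L, F (tu x) / d (tu x)) / (∫ x in (0:ℝ)..L, 1 / d (tu x))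
    with hG2def
  set c1 := L / dmax * (θ - α * G2) with hc1def
  have hc1pos : 0 < c1 := mul_pos (div_pos hL hdmaxpos) (by linarith)
  have hμ0pos : 0 < C0 ^ 2 * L ^ 3 / c1 + 1 :=
    add_pos_of_nonneg_of_pos (div_nonneg (by positivity) hc1pos.le) one_pos
  refine ⟨C0 ^ 2 * L ^ 3 / c1 + 1, hμ0pos, ?_⟩
  rintro μ hμ ⟨u, w, hu2, hw2, hupos, hwpos, hueq, hweq, hu'0, hu'L, hw'0, hw'L⟩
  have hμpos : 0 < μ := lt_of_lt_of_le hμ0pos hμ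
  have huc : ContinuousOn u (Set.Icc 0 L) := hu2.continuousOn
  have hwc : ContinuousOn w (Set.Icc 0 L) := hw2.continuousOn
  have humaps : Set.MapsTo u (Set.Icc 0 L) (Set.Ici 0) := fun x hx => (hupos x hx).le
  -- STEP B: comparison u ≤ tu
  have hcomp : ∀ x ∈ Set.Icc 0 L, u x ≤ tu x := by
    have hrc : ContinuousOn (fun x => u x / tu x) (Set.Icc 0 L) :=
      huc.div htuc (fun x hx => (htupos x hx).ne')
    obtain ⟨x₀, hx₀, hx₀max⟩ := isCompact_Icc.exists_isMaxOn hIne hrc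
    set k := u x₀ / tu x₀ with hkdef
    by_cases hk : k ≤ 1
    · intro x hx
      have h1 : u x / tu x ≤ k := hx₀max hx
      have h2 : 0 < tu x := htupos x hx
      rw [div_le_iff₀ h2] at h1
      nlinarith
    · exfalso
      push_neg at hk
      have htu0 : 0 < tu x₀ := htupos x₀ hx₀
      have hux₀ : u x₀ = k * tu x₀ := by rw [hkdef]; field_simp
      set φ := (fun x => k * tu x) - u with hφdef
      have hφ2 : ContDiffOn ℝ 2 φ (Set.Icc 0 L) := (contDiffOn_const.mul htu2).sub hu2
      have hφapp : ∀ x, φ x = k * tu x - u x := fun x => rfl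
      have hφ0 : φ x₀ = 0 := by rw [hφapp, hux₀]; ring
      have hφmin : ∀ x ∈ Set.Icc 0 L, φ x₀ ≤ φ x := by
        intro x hx
        rw [hφ0, hφapp]
        have h1 : u x / tu x ≤ k := hx₀max hx
        have h2 : 0 < tu x := htupos x hx
        rw [div_le_iff₀ h2] at h1
        linarith
      have hdtu : DifferentiableWithinAt ℝ tu (Set.Icc 0 L) x₀ :=
        (htu2.differentiableOn (by norm_num)) x₀ hx₀
      have hdu : DifferentiableWithinAt ℝ u (Set.Icc 0 L) x₀ :=
        (hu2.differentiableOn (by norm_num)) x₀ hx₀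
      have hφd0 : derivWithin φ (Set.Icc 0 L) x₀ = 0 := by
        by_cases hin : x₀ ∈ Set.Ioo 0 L
        · have hmem : Set.Icc (0:ℝ) L ∈ nhds x₀ := Icc_mem_nhds hin.1 hin.2
          have hloc : IsLocalMin φ x₀ :=
            Filter.eventually_of_mem hmem (fun x hx => hφ0 ▸ hφmin x hx)
          have hdiff : DifferentiableAt ℝ φ x₀ :=
            ((hφ2.differentiableOn (by norm_num)) x₀ hx₀).differentiableAt hmem
          rw [derivWithin_of_mem_nhds hmem]
          exact hloc.deriv_eq_zero
        · have hb : x₀ = 0 ∨ x₀ = L := by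
            rcases hx₀ with ⟨ha, hbb⟩
            by_contra hcon
            push_neg at hcon
            exact hin ⟨lt_of_le_of_ne ha (Ne.symm hcon.1), lt_of_le_of_ne hbb hcon.2⟩
          have hder : HasDerivWithinAt φ
              (k * derivWithin tu (Set.Icc 0 L) x₀ - derivWithin u (Set.Icc 0 L) x₀)
              (Set.Icc 0 L) x₀ :=
            (hdtu.hasDerivWithinAt.const_mul k).sub hdu.hasDerivWithinAt
          rw [hder.derivWithin (hu' x₀ hx₀)]
          rcases hb with h | h
          · rw [h] at *
            rw [htu'0, hu'0, mul_zero, sub_zero]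
          · rw [h] at *
            rw [htu'L, hu'L, mul_zero, sub_zero]
      have hφ'' := aux_min_dd hL hφ2 hx₀ hφmin hφd0
      have hiter : iteratedDerivWithin 2 φ (Set.Icc 0 L) x₀
          = k * iteratedDerivWithin 2 tu (Set.Icc 0 L) x₀
            - iteratedDerivWithin 2 u (Set.Icc 0 L) x₀ := by
        rw [hφdef, iteratedDerivWithin_sub hx₀ hu' ((contDiffOn_const.mul htu2) x₀ hx₀) (hu2 x₀ hx₀),
          iteratedDerivWithin_const_mul hx₀ hu' k (htu2 x₀ hx₀)]
      rw [hiter] at hφ''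
      have e1 := htueq x₀ hx₀
      have e2 := hueq x₀ hx₀
      have hP : 0 < F (u x₀) / d (u x₀) * w x₀ :=
        mul_pos (div_pos (hFpos _ (hupos x₀ hx₀)) (hd_pos _ (humaps hx₀))) (hwpos x₀ hx₀)
      have key : ε * (k * iteratedDerivWithin 2 tu (Set.Icc 0 L) x₀
          - iteratedDerivWithin 2 u (Set.Icc 0 L) x₀)
          = k * tu x₀ ^ 2 * (1 - k) - F (u x₀) / d (u x₀) * w x₀ := by
        have e1' : ε * iteratedDerivWithin 2 tu (Set.Icc 0 L) x₀
            = -(tu x₀ * (m x₀ - tu x₀)) := by linarith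
        have e2' : ε * iteratedDerivWithin 2 u (Set.Icc 0 L) x₀
            = -(u x₀ * (m x₀ - u x₀)) + F (u x₀) / d (u x₀) * w x₀ := by linarith
        calc ε * (k * iteratedDerivWithin 2 tu (Set.Icc 0 L) x₀
            - iteratedDerivWithin 2 u (Set.Icc 0 L) x₀)
            = k * (ε * iteratedDerivWithin 2 tu (Set.Icc 0 L) x₀)
              - ε * iteratedDerivWithin 2 u (Set.Icc 0 L) x₀ := by ring
          _ = k * (-(tu x₀ * (m x₀ - tu x₀)))
              - (-(u x₀ * (m x₀ - u x₀)) + F (u x₀) / d (u x₀) * w x₀) := by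
              rw [e1', e2']
          _ = k * tu x₀ ^ 2 * (1 - k) - F (u x₀) / d (u x₀) * w x₀ := by rw [hux₀]; ring
      have hbad : 0 ≤ ε * (k * iteratedDerivWithin 2 tu (Set.Icc 0 L) x₀
          - iteratedDerivWithin 2 u (Set.Icc 0 L) x₀) := mul_nonneg hε.le hφ''
      have hneg2 : 0 < k * tu x₀ ^ 2 * (k - 1) :=
        mul_pos (mul_pos (lt_trans one_pos hk) (pow_pos htu0 2)) (sub_pos.mpr hk)
      linarith
  -- bounds coming from u ∈ [0, Mu]
  have humem : ∀ x ∈ Set.Icc 0 L, u x ∈ Set.Icc 0 Mu :=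
    fun x hx => ⟨(hupos x hx).le, (hcomp x hx).trans (hxUmax hx)⟩
  have hdu_pos : ∀ x ∈ Set.Icc 0 L, 0 < d (u x) := fun x hx => hd_pos _ (humaps hx)
  have hdu_lb : ∀ x ∈ Set.Icc 0 L, dmin ≤ d (u x) := fun x hx => hsd1min (humem x hx)
  have hdu_ub : ∀ x ∈ Set.Icc 0 L, d (u x) ≤ dmax := fun x hx => hsd2max (humem x hx)
  have hFu_ub : ∀ x ∈ Set.Icc 0 L, |F (u x)| ≤ Fmax := fun x hx => hsFmax (humem x hx)
  -- continuity of the composite integrands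
  have hFud : ContinuousOn (fun x => F (u x) / d (u x)) (Set.Icc 0 L) :=
    (hFc.comp huc humaps).div (hdc.comp huc humaps) (fun x hx => (hdu_pos x hx).ne')
  have h1d : ContinuousOn (fun x => 1 / d (u x)) (Set.Icc 0 L) :=
    continuousOn_const.div (hdc.comp huc humaps) (fun x hx => (hdu_pos x hx).ne')
  have hh_cont : ContinuousOn (fun x => (α * F (u x) - θ) / d (u x)) (Set.Icc 0 L) :=
    ((continuousOn_const.mul (hFc.comp huc humaps)).sub continuousOn_const).div
      (hdc.comp huc humaps) (fun x hx => (hdu_pos x hx).ne')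
  have hii : ∀ {f : ℝ → ℝ}, ContinuousOn f (Set.Icc 0 L) →
      IntervalIntegrable f MeasureTheory.volume 0 L := by
    intro f hf
    have he : Set.uIcc (0:ℝ) L = Set.Icc 0 L := Set.uIcc_of_le hL.le
    exact ContinuousOn.intervalIntegrable (he ▸ hf)
  -- STEP D: u differs from tu somewhere, hence g(u) < g(tu)
  have hne : ∃ x ∈ Set.Icc 0 L, u x ≠ tu x := by
    by_contra hcon
    push_neg at hcon
    have hEq : Set.EqOn u tu (Set.Icc 0 L) := fun x hx => hcon x hx
    have hiter0 : iteratedDerivWithin 2 u (Set.Icc 0 L) 0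
        = iteratedDerivWithin 2 tu (Set.Icc 0 L) 0 :=
      iteratedDerivWithin_congr hEq hI0
    have e1 := hueq 0 hI0
    have e2 := htueq 0 hI0
    have e3 := hcon 0 hI0
    rw [hiter0, e3] at e1
    have hP : 0 < F (tu 0) / d (tu 0) * w 0 :=
      mul_pos (div_pos (hFpos _ (htupos 0 hI0))
        (hd_pos _ (Set.mem_Ici.mpr (htupos 0 hI0).le))) (hwpos 0 hI0)
    linarith
  have hglt := hH4 u tu huc htuc (fun x hx => (hupos x hx).le)
    (fun x hx => (htupos x hx).le) hcomp hne
  -- the integral of h := (α F(u) - θ)/d(u) is at most -c1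
  set A1 := ∫ x in (0:ℝ)..L, F (u x) / d (u x) with hA1def
  set B1 := ∫ x in (0:ℝ)..L, 1 / d (u x) with hB1def
  have hB1lb : L / dmax ≤ B1 := by
    have h := intervalIntegral.integral_mono_on hL.le intervalIntegrable_const (hii h1d)
      (fun x hx => one_div_le_one_div_of_le (hdu_pos x hx) (hdu_ub x hx))
    have hconst : (∫ _x in (0:ℝ)..L, (1 / dmax : ℝ)) = L / dmax := by
      rw [intervalIntegral.integral_const, smul_eq_mul, sub_zero, mul_one_div]
    rw [hB1def, ← hconst]
    exact h
  have hB1pos : 0 < B1 := lt_of_lt_of_le (div_pos hL hdmaxpos) hB1lb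
  set Jh := ∫ x in (0:ℝ)..L, (α * F (u x) - θ) / d (u x) with hJhdef
  have hJheq : Jh = α * A1 - θ * B1 := by
    have hcongr : (∫ x in (0:ℝ)..L, (α * F (u x) - θ) / d (u x))
        = ∫ x in (0:ℝ)..L, (α * (F (u x) / d (u x)) - θ * (1 / d (u x))) := by
      apply intervalIntegral.integral_congr
      intro x hx
      rw [Set.uIcc_of_le hL.le] at hx
      have hd0 : d (u x) ≠ 0 := (hdu_pos x hx).ne'
      field_simp
    rw [hJhdef, hcongr, intervalIntegral.integral_sub ((hii hFud).const_mul α)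
      ((hii h1d).const_mul θ), intervalIntegral.integral_const_mul,
      intervalIntegral.integral_const_mul]
  have hJhub : Jh ≤ -c1 := by
    have hB1ne : B1 ≠ 0 := hB1pos.ne'
    have h1 : α * (A1 / B1) - θ < α * G2 - θ := by
      have := mul_lt_mul_of_pos_left hglt hα
      linarith
    have hneg : α * G2 - θ < 0 := by linarith
    calc Jh = B1 * (α * (A1 / B1) - θ) := by rw [hJheq]; field_simp [hB1ne]
      _ ≤ B1 * (α * G2 - θ) := mul_le_mul_of_nonneg_left h1.le hB1pos.le
      _ ≤ L / dmax * (α * G2 - θ) := mul_le_mul_of_nonpos_right hB1lb hneg.le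
      _ = -c1 := by rw [hc1def]; ring
  -- STEP E: the integral of h·w vanishes
  have hw'cont : ContinuousOn (derivWithin w (Set.Icc 0 L)) (Set.Icc 0 L) :=
    hw2.continuousOn_derivWithin hu' (by norm_num)
  have hw''cont : ContinuousOn (iteratedDerivWithin 2 w (Set.Icc 0 L)) (Set.Icc 0 L) :=
    hw2.continuousOn_iteratedDerivWithin (by norm_num) hu'
  have hwderiv2 := fun x (hx : x ∈ Set.Ioo (0:ℝ) L) =>
    aux_hasDeriv2 hL hw2 x (Set.Ioo_subset_Icc_self hx)
  have hintw'' : ∫ x in (0:ℝ)..L, iteratedDerivWithin 2 w (Set.Icc 0 L) x = 0 := by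
    rw [aux_ftc hL le_rfl hL.le le_rfl hw'cont hw''cont hwderiv2, hw'L, hw'0, sub_zero]
  have hint0 : ∫ x in (0:ℝ)..L, (α * F (u x) - θ) / d (u x) * w x = 0 := by
    have hcongr : ∀ x ∈ Set.uIcc (0:ℝ) L, (α * F (u x) - θ) / d (u x) * w x
        = -μ * iteratedDerivWithin 2 w (Set.Icc 0 L) x := by
      intro x hx
      rw [Set.uIcc_of_le hL.le] at hx
      have := hweq x hx
      linarith
    rw [intervalIntegral.integral_congr hcongr, intervalIntegral.integral_const_mul,
      hintw'', mul_zero]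
  -- STEP F: flattening of w for large μ
  obtain ⟨xM, hxM, hxMmax⟩ := isCompact_Icc.exists_isMaxOn hIne hwc
  set M := w xM with hMdef
  have hMpos : 0 < M := hwpos xM hxM
  have hwub : ∀ x ∈ Set.Icc 0 L, w x ≤ M := fun x hx => hxMmax hx
  have hhb : ∀ x ∈ Set.Icc 0 L, |(α * F (u x) - θ) / d (u x)| ≤ C0 := by
    intro x hx
    rw [abs_div, abs_of_pos (hdu_pos x hx)]
    apply div_le_div₀ (by positivity) ?_ hdminpos (hdu_lb x hx)
    have h2 : |α * F (u x) - θ| ≤ |α * F (u x)| + |θ| := abs_sub _ _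
    rw [abs_mul, abs_of_pos hα] at h2
    have h3 : α * |F (u x)| ≤ α * Fmax := mul_le_mul_of_nonneg_left (hFu_ub x hx) hα.le
    linarith
  have hw''b : ∀ x ∈ Set.Icc 0 L, |iteratedDerivWithin 2 w (Set.Icc 0 L) x| ≤ C0 * M / μ := by
    intro x hx
    have he := hweq x hx
    have heq : μ * iteratedDerivWithin 2 w (Set.Icc 0 L) x
        = -((α * F (u x) - θ) / d (u x) * w x) := by linarith
    rw [le_div_iff₀ hμpos, mul_comm, ← abs_of_pos hμpos, ← abs_mul, heq, abs_neg, abs_mul,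
      abs_of_pos (hwpos x hx)]
    exact mul_le_mul (hhb x hx) (hwub x hx) (hwpos x hx).le hC0nn
  have hw'b : ∀ x ∈ Set.Icc 0 L, |derivWithin w (Set.Icc 0 L) x| ≤ C0 * M / μ * L := by
    have hlip1 := aux_lip hL hw'cont hw''cont hwderiv2 hw''b
    intro x hx
    have h := hlip1 0 hI0 x hx
    rw [hw'0, sub_zero] at h
    calc |derivWithin w (Set.Icc 0 L) x| ≤ C0 * M / μ * |x - 0| := h
      _ ≤ C0 * M / μ * L := by
          apply mul_le_mul_of_nonneg_left _
            (div_nonneg (mul_nonneg hC0nn hMpos.le) hμpos.le)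
          rw [sub_zero, abs_of_nonneg hx.1]
          exact hx.2
  have hwMb : ∀ x ∈ Set.Icc 0 L, |w x - M| ≤ C0 * M / μ * L * L := by
    have hwderiv1 : ∀ x ∈ Set.Ioo (0:ℝ) L,
        HasDerivWithinAt w (derivWithin w (Set.Icc 0 L) x) (Set.Icc 0 L) x := fun x hx =>
      ((hw2.differentiableOn (by norm_num)) x (Set.Ioo_subset_Icc_self hx)).hasDerivWithinAt
    have hlip2 := aux_lip hL hwc hw'cont hwderiv1 hw'b
    intro x hx
    have h := hlip2 xM hxM x hx
    have hxd : |x - xM| ≤ L := by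
      rw [abs_le]
      constructor <;> [linarith [hx.1, hxM.2]; linarith [hx.2, hxM.1]]
    calc |w x - M| ≤ C0 * M / μ * L * |x - xM| := h
      _ ≤ C0 * M / μ * L * L := mul_le_mul_of_nonneg_left hxd
          (mul_nonneg (div_nonneg (mul_nonneg hC0nn hMpos.le) hμpos.le) hL.le)
  -- STEP G: conclusion
  have hsplit : ∫ x in (0:ℝ)..L, (α * F (u x) - θ) / d (u x) * (w x - M) = -(Jh * M) := by
    have hcongr : ∀ x ∈ Set.uIcc (0:ℝ) L, (α * F (u x) - θ) / d (u x) * (w x - M)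
        = (α * F (u x) - θ) / d (u x) * w x - (α * F (u x) - θ) / d (u x) * M := by
      intro x _; ring
    rw [intervalIntegral.integral_congr hcongr,
      intervalIntegral.integral_sub (hii (f := fun x => (α * F (u x) - θ) / d (u x) * w x) (hh_cont.mul hwc)) (hii (f := fun x => (α * F (u x) - θ) / d (u x) * M) (hh_cont.mul continuousOn_const)),
      hint0, intervalIntegral.integral_mul_const, ← hJhdef]
    ring
  have hbound : |Jh * M| ≤ C0 * (C0 * M / μ * L * L) * L := by
    rw [← abs_neg, ← hsplit]
    have h := intervalIntegral.norm_integral_le_of_norm_le_const (a := (0:ℝ)) (b := L)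
      (C := C0 * (C0 * M / μ * L * L))
      (f := fun x => (α * F (u x) - θ) / d (u x) * (w x - M)) ?_
    · rw [Real.norm_eq_abs] at h
      calc |∫ x in (0:ℝ)..L, (α * F (u x) - θ) / d (u x) * (w x - M)|
          ≤ C0 * (C0 * M / μ * L * L) * |L - 0| := h
        _ = C0 * (C0 * M / μ * L * L) * L := by rw [sub_zero, abs_of_pos hL]
    · intro z hz
      have hzI : z ∈ Set.Icc (0:ℝ) L := by
        rw [Set.uIoc_of_le hL.le] at hz
        exact ⟨hz.1.le, hz.2⟩
      rw [Real.norm_eq_abs, abs_mul]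
      exact mul_le_mul (hhb z hzI) (hwMb z hzI) (abs_nonneg _) hC0nn
  have hJhabs : |Jh| ≤ C0 ^ 2 * L ^ 3 / μ := by
    rw [abs_mul, abs_of_pos hMpos] at hbound
    have h2 : C0 * (C0 * M / μ * L * L) * L = (C0 ^ 2 * L ^ 3 / μ) * M := by ring
    rw [h2] at hbound
    exact le_of_mul_le_mul_right hbound hMpos
  have h5 : c1 ≤ |Jh| := le_trans (by linarith) (neg_le_abs Jh)
  have h6 : c1 ≤ C0 ^ 2 * L ^ 3 / μ := le_trans h5 hJhabs
  have h7 : c1 * μ ≤ C0 ^ 2 * L ^ 3 := (le_div_iff₀ hμpos).mp h6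
  have h8 : C0 ^ 2 * L ^ 3 / c1 * c1 = C0 ^ 2 * L ^ 3 := div_mul_cancel₀ _ hc1pos.ne'
  have h9 : (C0 ^ 2 * L ^ 3 / c1 + 1) * c1 ≤ μ * c1 := mul_le_mul_of_nonneg_right hμ hc1pos.le
  rw [add_mul, h8, one_mul] at h9
  linarith
end

section
/- Assume (H1), (H2), (H3), fix ε, α, θ > 0, and let c > 0 satisfy α F(c) = θ. Assume min_{[0,L]} m ≥ c. Suppose u ∈ C²([0,L]) with 0 < u(x) ≤ c for all x, w : [0,L] → [0,∞) is continuous, the pair satisfies ε u'' + u(m − u) − (F(u)/d(u)) w = 0 on [0,L] with u'(0) = u'(L) = 0, and w(x) = 0 for every x with u(x) < c. Then u(x) = c for all x ∈ [0,L] and w(x) = (α/θ) c d(c) (m(x) − c) for all x ∈ [0,L]. -/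
/-- limiting profile as μ → 0. If `α F(c) = θ`, `min m ≥ c`,
`0 < u ≤ c` solves `ε u'' + u(m - u) - (F(u)/d(u)) w = 0` with Neumann
boundary conditions, and `w` vanishes wherever `u < c`, then `u ≡ c` and
`w(x) = (α/θ) c d(c) (m(x) - c)` on `[0,L]`. -/
theorem stmt_19 (L ε α θ c : ℝ) (hL : 0 < L) (hε : 0 < ε) (hα : 0 < α)
    (hθ : 0 < θ)
    (m F d u w : ℝ → ℝ)
    -- (H1)
    (hm_cont : ContinuousOn m (Set.Icc 0 L))
    (hm_noncon : ∃ x ∈ Set.Icc 0 L, ∃ y ∈ Set.Icc 0 L, m x ≠ m y)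
    (hm_int : 0 < ∫ x in (0:ℝ)..L, m x)
    -- (H2)
    (hF_smooth : ContDiffOn ℝ 1 F (Set.Ici 0)) (hF0 : F 0 = 0)
    (hF_deriv : ∀ s ∈ Set.Ici (0:ℝ), 0 < derivWithin F (Set.Ici 0) s)
    -- (H3)
    (hd_smooth : ContDiffOn ℝ 2 d (Set.Ici 0))
    (hd_pos : ∀ s ∈ Set.Ici (0:ℝ), 0 < d s)
    (hd_deriv : ∀ s ∈ Set.Ici (0:ℝ), derivWithin d (Set.Ici 0) s ≤ 0)
    (hd_ne : ∃ s ∈ Set.Ici (0:ℝ), derivWithin d (Set.Ici 0) s ≠ 0)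
    -- c = F⁻¹(θ/α) and min m ≥ c
    (hc : 0 < c) (hFc : α * F c = θ)
    (hm_min : ∀ x ∈ Set.Icc 0 L, c ≤ m x)
    -- u, w and the equation
    (hu_smooth : ContDiffOn ℝ 2 u (Set.Icc 0 L))
    (hu_pos : ∀ x ∈ Set.Icc 0 L, 0 < u x)
    (hu_le : ∀ x ∈ Set.Icc 0 L, u x ≤ c)
    (hw_cont : ContinuousOn w (Set.Icc 0 L))
    (hw_nonneg : ∀ x ∈ Set.Icc 0 L, 0 ≤ w x)
    (heq : ∀ x ∈ Set.Icc 0 L,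
      ε * iteratedDerivWithin 2 u (Set.Icc 0 L) x
        + u x * (m x - u x) - F (u x) / d (u x) * w x = 0)
    (hbc0 : derivWithin u (Set.Icc 0 L) 0 = 0)
    (hbcL : derivWithin u (Set.Icc 0 L) L = 0)
    (hw_zero : ∀ x ∈ Set.Icc 0 L, u x < c → w x = 0) :
    (∀ x ∈ Set.Icc 0 L, u x = c) ∧
    (∀ x ∈ Set.Icc 0 L, w x = α / θ * c * d c * (m x - c)) := by
  have hLle : (0:ℝ) ≤ L := hL.le
  set S := Set.Icc (0:ℝ) L with hSdef
  have hS : UniqueDiffOn ℝ S := uniqueDiffOn_Icc hL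
  set g := derivWithin u S with hgdef
  set h2 := iteratedDerivWithin 2 u S with hh2def
  have hg_cd : ContDiffOn ℝ 1 g S := hu_smooth.derivWithin hS (by norm_num)
  have hg_cont : ContinuousOn g S := hg_cd.continuousOn
  have hu_cont : ContinuousOn u S := hu_smooth.continuousOn
  have hh2_cont : ContinuousOn h2 S :=
    hu_smooth.continuousOn_iteratedDerivWithin (by norm_num) hS
  -- derivatives at interior points
  have hderiv_u : ∀ x ∈ Set.Ioo (0:ℝ) L, HasDerivAt u (g x) x := by
    intro x hx
    have hxS : x ∈ S := Set.Ioo_subset_Icc_self hx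
    have hnb : S ∈ nhds x := Icc_mem_nhds hx.1 hx.2
    exact (((hu_smooth.differentiableOn (by norm_num)) x hxS).hasDerivWithinAt).hasDerivAt hnb
  have hg_eq_one : ∀ x ∈ S, iteratedDerivWithin 1 u S x = g x := by
    intro x hx; exact congrFun iteratedDerivWithin_one x
  have hh2_eq : ∀ x ∈ S, h2 x = derivWithin g S x := by
    intro x hx
    rw [hh2def, show (2:ℕ) = 1 + 1 from rfl, iteratedDerivWithin_succ]
    exact derivWithin_congr hg_eq_one (hg_eq_one x hx)
  have hderiv_g : ∀ x ∈ Set.Ioo (0:ℝ) L, HasDerivAt g (h2 x) x := by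
    intro x hx
    have hxS : x ∈ S := Set.Ioo_subset_Icc_self hx
    have hnb : S ∈ nhds x := Icc_mem_nhds hx.1 hx.2
    have hdg : HasDerivWithinAt g (derivWithin g S x) S x :=
      ((hg_cd.differentiableOn (by norm_num)) x hxS).hasDerivWithinAt
    rw [← hh2_eq x hxS] at hdg
    exact hdg.hasDerivAt hnb
  -- integration by parts
  set H := fun x => g x * (c - u x) with hHdef
  set φ := fun x => h2 x * (c - u x) - g x * g x with hφdef
  have hH_cont : ContinuousOn H S :=
    hg_cont.mul (continuousOn_const.sub hu_cont)
  have hH_deriv : ∀ x ∈ Set.Ioo (0:ℝ) L, HasDerivAt H (φ x) x := by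
    intro x hx
    have : HasDerivAt (fun y => g y * (c - u y)) (h2 x * (c - u x) + g x * (0 - g x)) x :=
      (hderiv_g x hx).mul ((hasDerivAt_const x c).sub (hderiv_u x hx))
    convert this using 1
    show h2 x * (c - u x) - g x * g x = _; ring
  have hφ_cont : ContinuousOn φ S :=
    (hh2_cont.mul (continuousOn_const.sub hu_cont)).sub (hg_cont.mul hg_cont)
  have huIcc : Set.uIcc (0:ℝ) L = S := Set.uIcc_of_le hLle
  have hφ_int : IntervalIntegrable φ MeasureTheory.volume 0 L :=
    (huIcc ▸ hφ_cont).intervalIntegrable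
  have hint : ∫ x in (0:ℝ)..L, φ x = H L - H 0 :=
    intervalIntegral.integral_eq_sub_of_hasDeriv_right_of_le hLle hH_cont
      (fun x hx => (hH_deriv x hx).hasDerivWithinAt) hφ_int
  have hHL : H L = 0 := by
    show g L * (c - u L) = 0
    rw [hbcL, zero_mul]
  have hH0 : H 0 = 0 := by
    show g 0 * (c - u 0) = 0
    rw [hbc0, zero_mul]
  have h1_int : IntervalIntegrable (fun x => h2 x * (c - u x)) MeasureTheory.volume 0 L :=
    (huIcc ▸ (hh2_cont.mul (continuousOn_const.sub hu_cont))).intervalIntegrable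
  have h2_int : IntervalIntegrable (fun x => g x * g x) MeasureTheory.volume 0 L :=
    (huIcc ▸ (hg_cont.mul hg_cont)).intervalIntegrable
  have hsplit : (∫ x in (0:ℝ)..L, h2 x * (c - u x)) - ∫ x in (0:ℝ)..L, g x * g x
      = ∫ x in (0:ℝ)..L, φ x := (intervalIntegral.integral_sub h1_int h2_int).symm
  have hg2_nonneg : 0 ≤ ∫ x in (0:ℝ)..L, g x * g x :=
    intervalIntegral.integral_nonneg hLle (fun x _ => mul_self_nonneg _)
  -- pointwise sign of h2 x * (c - u x)
  have hkey : ∀ x ∈ S, u x < c → h2 x * (c - u x) < 0 := by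
    intro x hx hlt
    have hw0 : w x = 0 := hw_zero x hx hlt
    have he := heq x hx
    rw [hw0] at he
    have hh2x : h2 x = -(u x * (m x - u x)) / ε := by
      rw [mul_zero, sub_zero] at he
      rw [eq_div_iff hε.ne']
      linarith
    have hmu : 0 < m x - u x := by
      have := hm_min x hx; linarith
    have hupos := hu_pos x hx
    have hh2neg : h2 x < 0 := by
      rw [hh2x]
      apply div_neg_of_neg_of_pos _ hε
      nlinarith
    nlinarith
  have hkey' : ∀ x ∈ S, h2 x * (c - u x) ≤ 0 := by
    intro x hx
    rcases lt_or_eq_of_le (hu_le x hx) with h | h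
    · exact (hkey x hx h).le
    · rw [h]; simp
  -- main claim : u ≡ c
  have huc : ∀ x ∈ S, u x = c := by
    by_contra hcon
    push_neg at hcon
    obtain ⟨x₁, hx₁S, hx₁⟩ := hcon
    have hx₁lt : u x₁ < c := lt_of_le_of_ne (hu_le x₁ hx₁S) hx₁
    have hpos : 0 < ∫ x in (0:ℝ)..L, -(h2 x * (c - u x)) := by
      apply intervalIntegral.integral_pos hL
      · exact (hh2_cont.mul (continuousOn_const.sub hu_cont)).neg
      · intro x hx
        have hxS : x ∈ S := Set.mem_Icc.2 ⟨hx.1.le, hx.2⟩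
        simpa using hkey' x hxS
      · exact ⟨x₁, hx₁S, by simpa using hkey x₁ hx₁S hx₁lt⟩
    rw [intervalIntegral.integral_neg] at hpos
    have hneg : (∫ x in (0:ℝ)..L, h2 x * (c - u x)) < 0 := by linarith
    rw [hint, hHL, hH0, sub_zero] at hsplit
    linarith
  refine ⟨huc, ?_⟩
  -- g ≡ 0 on S
  have hg0 : ∀ x ∈ S, g x = 0 := by
    intro x hx
    rw [hgdef, derivWithin_congr huc (huc x hx)]
    exact congrFun (derivWithin_const S c) x
  have hh20 : ∀ x ∈ S, h2 x = 0 := by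
    intro x hx
    rw [hh2_eq x hx, derivWithin_congr hg0 (hg0 x hx)]
    exact congrFun (derivWithin_const S (0:ℝ)) x
  intro x hx
  have he := heq x hx
  rw [huc x hx] at he
  rw [hh20 x hx] at he
  have hFcpos : 0 < F c := by
    have : F c = θ / α := by field_simp; linarith
    rw [this]; positivity
  have hdc : 0 < d c := hd_pos c (le_of_lt hc)
  have hFcv : F c = θ / α := by field_simp; linarith
  rw [hFcv] at he
  have hdc' : d c ≠ 0 := hdc.ne'
  field_simp at he ⊢
  nlinarith [he]
end
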